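/- There exist infinitely many finite pairwise non-isomorphic quandles all having enveloping group isomorphic to ℤ × ℤ. -/
import Mathlib

open Quandles

namespace QZZ

/-- The underlying type of our quandle family. -/
abbrev Q (k : ℕ) : Type := Option (ZMod (k + 1))

/-- The quandle action: `none` shifts the `some` part by 1, everything else trivial. -/
def qact (k : ℕ) : Q k → Q k → Q k
  | none, none => none
  | none, some j => some (j + 1)
  | some _, y => y

def qinv (k : ℕ) : Q k → Q k → Q k
  | none, none => none
  | none, some j => some (j - 1)
  | some _, y => y

instance inst (k : ℕ) : Quandle (Q k) where
  act := qact k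
  self_distrib := by
    rintro (_|x) (_|y) (_|z) <;> rfl
  invAct := qinv k
  left_inv := by rintro (_|x) (_|y) <;> simp [qact, qinv]
  right_inv := by rintro (_|x) (_|y) <;> simp [qact, qinv]
  fix := by rintro (_|x) <;> rfl

lemma act_none_some (k : ℕ) (j : ZMod (k+1)) :
    (Shelf.act (none : Q k) (some j)) = some (j + 1) := rfl

lemma act_some (k : ℕ) (i : ZMod (k+1)) (y : Q k) :
    Shelf.act (some i : Q k) y = y := rfl

open Rack

abbrev E (k : ℕ) := Rack.EnvelGroup (Q k)

noncomputable abbrev t (k : ℕ) : Q k → E k := fun x => Rack.toEnvelGroup (Q k) x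

lemma t_act (k : ℕ) (x y : Q k) :
    t k (Shelf.act x y) = t k x * t k y * (t k x)⁻¹ :=
  (Rack.toEnvelGroup (Q k)).map_act'

lemma comm_some (k : ℕ) (i : ZMod (k+1)) (y : Q k) :
    Commute (t k (some i)) (t k y) := by
  have h := t_act k (some i) y
  rw [act_some] at h
  have : t k y * t k (some i) = t k (some i) * t k y := by
    conv_lhs => rw [h]
    group
  exact this.symm

lemma t_some_succ (k : ℕ) (j : ZMod (k+1)) :
    t k (some (j + 1)) = t k (some j) := by
  have h := t_act k (none) (some j)
  rw [act_none_some] at h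
  rw [h, (comm_some k j none).symm.eq]
  group

lemma t_some_eq (k : ℕ) (j : ZMod (k+1)) :
    t k (some j) = t k (some 0) := by
  have key : ∀ n : ℕ, t k (some (n : ZMod (k+1))) = t k (some 0) := by
    intro n
    induction n with
    | zero => norm_num
    | succ n ih => push_cast; rw [t_some_succ]; exact_mod_cast ih
  have := key j.val
  rwa [ZMod.natCast_val, ZMod.cast_id] at this

/-- the shelf hom to the conjugation quandle of ℤ × ℤ -/
def φ (k : ℕ) : Q k →◃ Quandle.Conj (Multiplicative (ℤ × ℤ)) where
  toFun x := Multiplicative.ofAdd (match x with | none => ((1 : ℤ), (0 : ℤ)) | some _ => ((0 : ℤ), (1 : ℤ)))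
  map_act' := by
    rintro (_|x) (_|y) <;>
      simp [qact, Quandle.conj_act_eq_conj, mul_comm, Shelf.act]

noncomputable def f (k : ℕ) : E k →* Multiplicative (ℤ × ℤ) :=
  Rack.toEnvelGroup.map (φ k)

lemma f_t (k : ℕ) (x : Q k) : f k (t k x) = φ k x := rfl

noncomputable def g (k : ℕ) : Multiplicative (ℤ × ℤ) →* E k where
  toFun p := t k none ^ (p.toAdd.1) * t k (some 0) ^ (p.toAdd.2)
  map_one' := by simp
  map_mul' p q := by
    have hc : Commute (t k (some 0)) (t k none) := comm_some k 0 none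
    show t k none ^ (p.toAdd.1 + q.toAdd.1) * t k (some 0) ^ (p.toAdd.2 + q.toAdd.2) = _
    rw [zpow_add, zpow_add]
    rw [mul_assoc, mul_assoc, ← mul_assoc (t k (some 0) ^ p.toAdd.2)]
    rw [(hc.zpow_zpow p.toAdd.2 q.toAdd.1).eq]
    group

lemma g_f_t (k : ℕ) (x : Q k) : g k (f k (t k x)) = t k x := by
  cases x with
  | none =>
    show t k none ^ (1:ℤ) * t k (some 0) ^ (0:ℤ) = t k none
    simp
  | some j =>
    show t k none ^ (0:ℤ) * t k (some 0) ^ (1:ℤ) = t k (some j)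
    simp [t_some_eq k j]

lemma gf_id (k : ℕ) : (g k).comp (f k) = MonoidHom.id (E k) := by
  have h1 : (g k).comp (f k) = Rack.toEnvelGroup.map (Rack.toEnvelGroup (Q k)) := by
    apply Rack.toEnvelGroup.univ_uniq
    ext x
    exact (g_f_t k x).symm
  have h2 : MonoidHom.id (E k) = Rack.toEnvelGroup.map (Rack.toEnvelGroup (Q k)) := by
    apply Rack.toEnvelGroup.univ_uniq
    ext x
    rfl
  rw [h1, h2]

lemma fg_id (k : ℕ) (p : Multiplicative (ℤ × ℤ)) : f k (g k p) = p := by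
  show f k (t k none ^ (p.toAdd.1) * t k (some 0) ^ (p.toAdd.2)) = p
  rw [map_mul, map_zpow, map_zpow, f_t, f_t]
  show (Multiplicative.ofAdd ((1:ℤ), (0:ℤ)))^(p.toAdd.1) *
    (Multiplicative.ofAdd ((0:ℤ), (1:ℤ)))^(p.toAdd.2) = p
  rw [← ofAdd_zsmul, ← ofAdd_zsmul, ← ofAdd_add]
  simp [Prod.ext_iff]

noncomputable def envEquiv (k : ℕ) : E k ≃* Multiplicative (ℤ × ℤ) where
  toFun := f k
  invFun := g k
  left_inv x := DFunLike.congr_fun (gf_id k) x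
  right_inv := fg_id k
  map_mul' := (f k).map_mul

end QZZ

theorem infinitely_many_finite_quandles_with_envelGroup_ZxZ :
    ∃ (Q : ℕ → Type) (inst : ∀ k, Quandle (Q k)),
      (∀ k, Finite (Q k)) ∧
      (∀ k, Nonempty (@Rack.EnvelGroup (Q k) (inst k).toRack ≃* Multiplicative (ℤ × ℤ))) ∧
      (∀ k l, k ≠ l →
        ¬∃ f : Q k ≃ Q l, ∀ a b : Q k,
          f (@Shelf.act (Q k) (inst k).toShelf a b)
            = @Shelf.act (Q l) (inst l).toShelf (f a) (f b)) := by
  refine ⟨QZZ.Q, QZZ.inst, fun k => inferInstance, fun k => ⟨QZZ.envEquiv k⟩, ?_⟩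
  rintro k l hkl ⟨f, -⟩
  apply hkl
  have := Fintype.card_congr f
  simpa [ZMod.card] using this
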